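/- Let I ⊆ ℝ[x_{ij} : 1 ≤ i < j ≤ 6] be the ideal generated by: x_{ij}² − x_{ij} for all 1 ≤ i < j ≤ 6; x_{ij}·x_{ik}·x_{jk} for all 1 ≤ i < j < k ≤ 6; and (1 − x_{ij})(1 − x_{ik})(1 − x_{jk}) for all 1 ≤ i < j < k ≤ 6. Then 1 + 1/2 + (1/6)·Σ_{i=1}^{6} ( √2 · Σ_{j ∈ {1,…,6}∖{i}} x_{ij} − 5/√2 )² ∈ I; that is, the flag sum of squares 1/2 + (1/6)·Σ_{i=1}^{6} ( √2 Σ_{j≠i} x_{ij} − 5/√2 )² is congruent to −1 modulo I. Consequently, there is no point x ∈ ℝ^{15} at which every generator of I vanishes (the real variety of I is empty), proving R(3,3) ≤ 6. -/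
import Mathlib


open MvPolynomial Finset
open scoped Classical

noncomputable section

abbrev PolyRing6 := MvPolynomial (Sym2 (Fin 6)) ℝ

def xe (i j : Fin 6) : PolyRing6 := X s(i, j)

/-- The generators of the Ramsey ideal: `x_{ij}² − x_{ij}`, the red-triangle monomials
`x_{ij}x_{ik}x_{jk}`, and the blue-triangle polynomials `(1−x_{ij})(1−x_{ik})(1−x_{jk})`. -/
def ramseyGens : Set PolyRing6 :=
  {q | ∃ i j : Fin 6, i ≠ j ∧ q = xe i j ^ 2 - xe i j} ∪
  {q | ∃ i j k : Fin 6, i ≠ j ∧ i ≠ k ∧ j ≠ k ∧ q = xe i j * xe i k * xe j k} ∪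
  {q | ∃ i j k : Fin 6, i ≠ j ∧ i ≠ k ∧ j ≠ k ∧
      q = (1 - xe i j) * (1 - xe i k) * (1 - xe j k)}

def ramseyIdeal : Ideal PolyRing6 := Ideal.span ramseyGens

-- pigeonhole on 5 booleans
lemma pigeon5 : ∀ f : Fin 5 → Bool, ∃ a b d : Fin 5,
    a ≠ b ∧ a ≠ d ∧ b ≠ d ∧ f a = f b ∧ f a = f d := by decide

lemma ramsey6 (c : Sym2 (Fin 6) → Bool) :
    ∃ i j k : Fin 6, i ≠ j ∧ i ≠ k ∧ j ≠ k ∧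
      c s(i, j) = c s(i, k) ∧ c s(i, j) = c s(j, k) := by
  obtain ⟨a, b, d, hab, had, hbd, h1, h2⟩ := pigeon5 (fun m => c s(0, m.succ))
  set u := a.succ with hu
  set v := b.succ with hv
  set w := d.succ with hw
  have huv : u ≠ v := fun h => hab (Fin.succ_injective _ h)
  have huw : u ≠ w := fun h => had (Fin.succ_injective _ h)
  have hvw : v ≠ w := fun h => hbd (Fin.succ_injective _ h)
  have h0u : (0 : Fin 6) ≠ u := (Fin.succ_ne_zero a).symm
  have h0v : (0 : Fin 6) ≠ v := (Fin.succ_ne_zero b).symm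
  have h0w : (0 : Fin 6) ≠ w := (Fin.succ_ne_zero d).symm
  by_cases e1 : c s(u, v) = c s(0, u)
  · exact ⟨0, u, v, h0u, h0v, huv, h1, e1.symm⟩
  by_cases e2 : c s(u, w) = c s(0, u)
  · exact ⟨0, u, w, h0u, h0w, huw, h2, e2.symm⟩
  by_cases e3 : c s(v, w) = c s(0, v)
  · refine ⟨0, v, w, h0v, h0w, hvw, ?_, ?_⟩
    · rw [← h1, h2]
    · exact e3.symm ▸ rfl
  · rw [← h1] at e3
    refine ⟨u, v, w, huv, huw, hvw, ?_, ?_⟩ <;>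
      revert e1 e2 e3 <;> cases c s(u,v) <;> cases c s(u,w) <;> cases c s(v,w) <;>
        cases c s(0,u) <;> simp

lemma sym2_ne1 (i j k : Fin 6) (hik : i ≠ k) (hjk : j ≠ k) : s(i,j) ≠ s(i,k) := by
  simp [Sym2.eq_iff]; tauto

lemma sym2_ne2 (i j k : Fin 6) (hij : i ≠ j) (hik : i ≠ k) : s(i,j) ≠ s(j,k) := by
  simp [Sym2.eq_iff]; tauto

lemma sym2_ne3 (i j k : Fin 6) (hij : i ≠ j) (hik : i ≠ k) : s(i,k) ≠ s(j,k) := by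
  simp [Sym2.eq_iff]; tauto

lemma one_mem_ramseyIdeal : (1 : PolyRing6) ∈ ramseyIdeal := by
  have key : (1 : PolyRing6) =
      ∑ t ∈ (univ : Finset (Sym2 (Fin 6))).powerset,
        (∏ e ∈ t, X e) * ∏ e ∈ univ \ t, (1 - X e) := by
    rw [← Finset.prod_add]
    have h : ∀ e : Sym2 (Fin 6), (X e + (1 - X e) : PolyRing6) = 1 := fun e => by ring
    simp [h]
  rw [key]
  refine Ideal.sum_mem _ ?_
  intro t _
  obtain ⟨i, j, k, hij, hik, hjk, hc1, hc2⟩ := ramsey6 (fun e => decide (e ∈ t))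
  simp only [decide_eq_decide] at hc1 hc2
  have hne1 : s(i,j) ≠ s(i,k) := sym2_ne1 i j k hik hjk
  have hne2 : s(i,j) ≠ s(j,k) := sym2_ne2 i j k hij hik
  have hne3 : s(i,k) ≠ s(j,k) := sym2_ne3 i j k hij hik
  by_cases hm : s(i,j) ∈ t
  · -- red triangle
    have ht2 : s(i,k) ∈ t := hc1.mp hm
    have ht3 : s(j,k) ∈ t := hc2.mp hm
    have hsub : ({s(i,j), s(i,k), s(j,k)} : Finset (Sym2 (Fin 6))) ⊆ t := by
      simp [Finset.insert_subset_iff, hm, ht2, ht3]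
    have hdvd := Finset.prod_dvd_prod_of_subset _ _ (fun e => (X e : PolyRing6)) hsub
    have hT : (∏ e ∈ ({s(i,j), s(i,k), s(j,k)} : Finset (Sym2 (Fin 6))), (X e : PolyRing6))
        = xe i j * xe i k * xe j k := by
      rw [Finset.prod_insert (by simp [hne1, hne2]),
          Finset.prod_insert (by simp [hne3]), Finset.prod_singleton, mul_assoc]
      rfl
    obtain ⟨u, hu⟩ := hdvd
    rw [hu, hT]
    exact Ideal.mul_mem_right _ _ (Ideal.mul_mem_right _ _ (Ideal.subset_span
      (Or.inl (Or.inr ⟨i, j, k, hij, hik, hjk, rfl⟩))))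
  · -- blue triangle
    have ht2 : s(i,k) ∉ t := fun h => hm (hc1.mpr h)
    have ht3 : s(j,k) ∉ t := fun h => hm (hc2.mpr h)
    have hsub : ({s(i,j), s(i,k), s(j,k)} : Finset (Sym2 (Fin 6))) ⊆ univ \ t := by
      simp [Finset.insert_subset_iff, hm, ht2, ht3]
    have hdvd := Finset.prod_dvd_prod_of_subset _ _
      (fun e => ((1 - X e) : PolyRing6)) hsub
    have hT : (∏ e ∈ ({s(i,j), s(i,k), s(j,k)} : Finset (Sym2 (Fin 6))),
          ((1 - X e) : PolyRing6)) = (1 - xe i j) * (1 - xe i k) * (1 - xe j k) := by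
      rw [Finset.prod_insert (by simp [hne1, hne2]),
          Finset.prod_insert (by simp [hne3]), Finset.prod_singleton, mul_assoc]
      rfl
    obtain ⟨u, hu⟩ := hdvd
    rw [hu, hT]
    exact Ideal.mul_mem_left _ _ (Ideal.mul_mem_right _ _ (Ideal.subset_span
      (Or.inr ⟨i, j, k, hij, hik, hjk, rfl⟩)))

theorem stmt11 :
    (1 + C (1 / 2 : ℝ) + C (1 / 6 : ℝ) *
        ∑ i : Fin 6,
          (C (Real.sqrt 2) * (∑ j ∈ Finset.univ.filter (fun j : Fin 6 => j ≠ i), xe i j)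
            - C (5 / Real.sqrt 2)) ^ 2) ∈ ramseyIdeal ∧
    ¬ ∃ x : Sym2 (Fin 6) → ℝ, ∀ q ∈ ramseyGens, eval x q = 0 := by
  have htop : ramseyIdeal = ⊤ := (Ideal.eq_top_iff_one _).mpr one_mem_ramseyIdeal
  constructor
  · rw [htop]; exact Submodule.mem_top
  · rintro ⟨x, hx⟩
    have hle : ramseyIdeal ≤ RingHom.ker (eval x) :=
      Ideal.span_le.mpr (fun q hq => hx q hq)
    have h0 := hle (one_mem_ramseyIdeal)
    rw [RingHom.mem_ker, map_one] at h0
    exact one_ne_zero h0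

end
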